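/- Let f be a smooth symmetric concave function on Γ with f_i ≥ 0 and σ < sup_Γ f with ∂Γ^σ ≠ ∅, τ_σ finite, and let c_σ > 0 satisfy f(c_σ𝟏) = σ. Then τ_σ ≤ c_σ, with equality if and only if f_1(λ) = f_2(λ) = ⋯ = f_n(λ) for every λ ∈ ∂Γ^σ. -/

import Mathlib

open Finset Filter Topology

/-- The i-th partial derivative `f_i(x) = ∂f/∂x_i (x)`. -/
noncomputable def pd {n : ℕ} (f : (Fin n → ℝ) → ℝ) (x : Fin n → ℝ) (i : Fin n) : ℝ :=
  fderiv ℝ f x (Pi.single i 1)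

/-- The set of values `t_λ = (∑ f_i(λ) λ_i)/(∑ f_j(λ))` over the level set `∂Γ^σ`. -/
def tset {n : ℕ} (Γ : Set (Fin n → ℝ)) (f : (Fin n → ℝ) → ℝ) (σ : ℝ) : Set ℝ :=
  {t : ℝ | ∃ x ∈ Γ, f x = σ ∧ t = (∑ i, pd f x i * x i) / (∑ i, pd f x i)}

/-- The cone `Γ_{σ,f} = { t (λ - τ 𝟏) : λ ∈ ∂Γ^σ, t > 0 }`. -/
def lcone {n : ℕ} (Γ : Set (Fin n → ℝ)) (f : (Fin n → ℝ) → ℝ) (σ τ : ℝ) :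
    Set (Fin n → ℝ) :=
  {y | ∃ x ∈ Γ, f x = σ ∧ ∃ t : ℝ, 0 < t ∧ y = t • (x - fun _ => τ)}

/-- The set of `k` such that some vector with the first `k` coordinates negative and
the remaining coordinates positive belongs to `C`; `κ_C` is its greatest element. -/
def kset {n : ℕ} (C : Set (Fin n → ℝ)) : Set ℕ :=
  {k : ℕ | ∃ α : Fin n → ℝ, (∀ i, 0 < α i) ∧
    (fun i : Fin n => if (i : ℕ) < k then -α i else α i) ∈ C}
lemma clm_eval_eq_sum {n : ℕ} (L : (Fin n → ℝ) →L[ℝ] ℝ) (v : Fin n → ℝ) :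
    L v = ∑ i, v i * L (Pi.single i 1) := by
  have h : (∑ i, v i • (Pi.single i (1:ℝ) : Fin n → ℝ)) = v := by
    ext j; simp [Pi.single_apply]
  calc L v = L (∑ i, v i • (Pi.single i (1:ℝ) : Fin n → ℝ)) := by rw [h]
    _ = ∑ i, v i * L (Pi.single i 1) := by
        rw [map_sum]; simp [smul_eq_mul]

lemma grad_ineq {n : ℕ} {Γ : Set (Fin n → ℝ)} {f : (Fin n → ℝ) → ℝ}
    (hconc : ConcaveOn ℝ Γ f)
    (hdiff : ∀ x ∈ Γ, DifferentiableAt ℝ f x)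
    {x y : Fin n → ℝ} (hx : x ∈ Γ) (hy : y ∈ Γ) :
    f y ≤ f x + fderiv ℝ f x (y - x) := by
  set φ : ℝ → ℝ := fun t => f (x + t • (y - x)) with hφ
  have hline : HasDerivAt (fun t : ℝ => x + t • (y - x)) (y - x) 0 := by
    simpa using ((hasDerivAt_id (0:ℝ)).smul_const (y - x)).const_add x
  have hf' : HasFDerivAt f (fderiv ℝ f x) (x + (0:ℝ) • (y - x)) := by
    simpa using (hdiff x hx).hasFDerivAt
  have hφd : HasDerivAt φ (fderiv ℝ f x (y - x)) 0 := hf'.comp_hasDerivAt 0 hline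
  have key : ∀ t : ℝ, t ∈ Set.Ioc (0:ℝ) 1 → f y - f x ≤ (φ t - φ 0) / t := by
    intro t ht
    have hcc := hconc.2 hx hy (by linarith [ht.2] : (0:ℝ) ≤ 1 - t) (le_of_lt ht.1) (by ring)
    have hφt : (1 - t) * f x + t * f y ≤ φ t := by
      simp only [smul_eq_mul] at hcc
      have hxy : x + t • (y - x) = (1 - t) • x + t • y := by module
      show (1 - t) * f x + t * f y ≤ f (x + t • (y - x))
      rw [hxy]; exact hcc
    have hφ0 : φ 0 = f x := by simp [hφ]
    rw [le_div_iff₀ ht.1]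
    nlinarith
  have h2 : Tendsto (slope φ 0) (𝓝[>] (0:ℝ)) (𝓝 (fderiv ℝ f x (y - x))) :=
    (hasDerivAt_iff_tendsto_slope.1 hφd).mono_left
      (nhdsWithin_mono _ fun t ht => ne_of_gt ht)
  have : f y - f x ≤ fderiv ℝ f x (y - x) := by
    refine ge_of_tendsto h2 ?_
    filter_upwards [Ioc_mem_nhdsGT_of_mem (by norm_num : (0:ℝ) ∈ Set.Ico (0:ℝ) 1)] with t ht
    have := key t ht
    simpa [slope_def_field, sub_zero] using this
  linarith

lemma pd_perm {n : ℕ} {Γ : Set (Fin n → ℝ)} {f : (Fin n → ℝ) → ℝ}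
    (hopen : IsOpen Γ)
    (hΓsym : ∀ (g : Equiv.Perm (Fin n)), ∀ x ∈ Γ, x ∘ g ∈ Γ)
    (hfsym : ∀ (g : Equiv.Perm (Fin n)), ∀ x ∈ Γ, f (x ∘ g) = f x)
    (hdiff : ∀ x ∈ Γ, DifferentiableAt ℝ f x)
    (g : Equiv.Perm (Fin n)) {x : Fin n → ℝ} (hx : x ∈ Γ) (i : Fin n) :
    pd f x (g i) = pd f (x ∘ g) i := by
  classical
  set Pg : (Fin n → ℝ) →L[ℝ] (Fin n → ℝ) :=
    ContinuousLinearMap.pi (fun j => ContinuousLinearMap.proj (g j)) with hPg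
  have hPgapp : ∀ v : Fin n → ℝ, Pg v = v ∘ g := fun v => rfl
  have heq : (f ∘ Pg) =ᶠ[nhds x] f := by
    filter_upwards [hopen.mem_nhds hx] with y hy
    simpa [hPgapp] using hfsym g y hy
  have hdg : DifferentiableAt ℝ f (Pg x) := by
    rw [hPgapp]; exact hdiff _ (hΓsym g x hx)
  have hcomp : fderiv ℝ (f ∘ Pg) x = (fderiv ℝ f (Pg x)).comp Pg := by
    rw [fderiv_comp x hdg Pg.differentiableAt, Pg.fderiv]
  have hfe : fderiv ℝ (f ∘ Pg) x = fderiv ℝ f x := heq.fderiv_eq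
  have hsingle : (Pi.single (g i) (1:ℝ)) ∘ g = Pi.single i 1 := by
    funext j
    simp [Pi.single_apply, Function.comp, Equiv.apply_eq_iff_eq]
  have := congrArg (fun L : (Fin n → ℝ) →L[ℝ] ℝ => L (Pi.single (g i) 1)) (hfe.symm.trans hcomp)
  simpa [pd, hPgapp, hsingle] using this

lemma arith_pos_of_mul {a b : ℝ} (ha : 0 ≤ a) (hab : 0 < a * b) : 0 < b := by
  by_contra hle
  push_neg at hle
  nlinarith

lemma arith_le_of_add {σ a s m : ℝ} (ha : 0 < a) (h : σ ≤ σ + a * (s - m)) : m ≤ s := by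
  nlinarith

lemma arith_mul_le {nn c p s : ℝ} (hp : 0 < p) (hs : nn * c ≤ s) : c * (nn * p) ≤ p * s := by
  nlinarith

theorem stmt18 {n : ℕ} (Γ : Set (Fin n → ℝ)) (f : (Fin n → ℝ) → ℝ)
    (hopen : IsOpen Γ) (hconv : Convex ℝ Γ)
    (hcone : ∀ x ∈ Γ, ∀ t : ℝ, 0 < t → t • x ∈ Γ)
    (horth : {x : Fin n → ℝ | ∀ i, 0 < x i} ⊆ Γ)
    (hΓsym : ∀ (g : Equiv.Perm (Fin n)), ∀ x ∈ Γ, x ∘ g ∈ Γ)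
    (hfsym : ∀ (g : Equiv.Perm (Fin n)), ∀ x ∈ Γ, f (x ∘ g) = f x)
    (hconc : ConcaveOn ℝ Γ f)
    (hsmooth : ContDiffOn ℝ (⊤ : ℕ∞) f Γ)
    (hdiff : ∀ x ∈ Γ, DifferentiableAt ℝ f x)
    (hpd : ∀ x ∈ Γ, ∀ i, 0 ≤ pd f x i)
    (σ : ℝ) (hσ : ∃ μ ∈ Γ, σ < f μ) (hne : ∃ x ∈ Γ, f x = σ)
    (τ : ℝ) (hτ : IsGLB (tset Γ f σ) τ)
    (c : ℝ) (hc : 0 < c) (hcΓ : (fun _ : Fin n => c) ∈ Γ)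
    (hclev : f (fun _ : Fin n => c) = σ) :
    τ ≤ c ∧
      (τ = c ↔ ∀ lam ∈ Γ, f lam = σ →
        ∀ i j : Fin n, pd f lam i = pd f lam j) := by
  classical
  set cv : Fin n → ℝ := fun _ => c with hcv
  obtain ⟨μ0, hμ0Γ, hμ0⟩ := hσ
  -- n is positive
  have hn : 0 < n := by
    rcases Nat.eq_zero_or_pos n with h0 | h
    · exfalso
      subst h0
      have : μ0 = cv := funext fun i => i.elim0
      rw [this, hclev] at hμ0
      exact lt_irrefl _ hμ0
    · exact h
  -- expansion of the pairing
  have expand : ∀ x : Fin n → ℝ, ∀ v : Fin n → ℝ,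
      fderiv ℝ f x v = ∑ k, v k * pd f x k := fun x v => clm_eval_eq_sum _ v
  -- positivity of the sum of partial derivatives on the level set
  have hS : ∀ x ∈ Γ, f x = σ → 0 < ∑ k, pd f x k := by
    intro x hx hlev
    rcases (Finset.sum_nonneg fun k _ => hpd x hx k).lt_or_eq with h | h
    · exact h
    · exfalso
      have hz : ∀ k, pd f x k = 0 := by
        intro k
        exact (Finset.sum_eq_zero_iff_of_nonneg (fun k _ => hpd x hx k)).1 h.symm k (mem_univ k)
      have hgi := grad_ineq hconc hdiff hx hμ0Γ
      rw [expand] at hgi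
      simp only [hz, mul_zero, Finset.sum_const_zero, add_zero, hlev] at hgi
      exact absurd hμ0 (not_lt.2 hgi)
  -- t_{c 1} = c, hence τ ≤ c
  have hSc := hS _ hcΓ hclev
  have hct : c ∈ tset Γ f σ := by
    refine ⟨cv, hcΓ, hclev, ?_⟩
    have : (∑ k, pd f cv k * cv k) / (∑ k, pd f cv k) = c := by
      have h1 : ∀ k : Fin n, pd f cv k * cv k = pd f cv k * c := by
        intro k; rfl
      rw [Finset.sum_congr rfl fun k _ => h1 k, ← Finset.sum_mul]
      field_simp
    exact this.symm
  have hτle : τ ≤ c := hτ.1 hct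
  -- upper bound: t_λ ≤ c for every λ in the level set
  have htle : ∀ x ∈ Γ, f x = σ →
      (∑ k, pd f x k * x k) / (∑ k, pd f x k) ≤ c := by
    intro x hx hlev
    have hgi := grad_ineq hconc hdiff hx hcΓ
    rw [expand, hclev, hlev] at hgi
    have hexp : ∑ k, (cv - x) k * pd f x k
        = c * (∑ k, pd f x k) - ∑ k, pd f x k * x k := by
      rw [Finset.mul_sum, ← Finset.sum_sub_distrib]
      refine Finset.sum_congr rfl fun k _ => ?_
      simp only [Pi.sub_apply, hcv]
      ring
    rw [hexp] at hgi
    have hSx := hS x hx hlev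
    rw [div_le_iff₀ hSx]
    linarith
  -- all partial derivatives at c𝟏 agree
  have hpdc : ∀ i j : Fin n, pd f cv i = pd f cv j := by
    intro i j
    have hfix : (cv ∘ (Equiv.swap i j)) = cv := rfl
    have h1 := pd_perm hopen hΓsym hfsym hdiff (Equiv.swap i j) hcΓ j
    rw [hfix, Equiv.swap_apply_right] at h1
    exact h1
  refine ⟨hτle, ?_, ?_⟩
  · -- hard direction: τ = c → partial derivatives agree on the level set
    intro hτc lam hlam hlev i j
    by_contra hne'
    set g := Equiv.swap i j with hg
    have hij : i ≠ j := by rintro rfl; exact hne' rfl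
    have hlam'Γ : lam ∘ g ∈ Γ := hΓsym g lam hlam
    have hlam'lev : f (lam ∘ g) = σ := by rw [hfsym g lam hlam, hlev]
    -- lam i ≠ lam j
    have hlij : lam i ≠ lam j := by
      intro he
      have hfix : lam ∘ g = lam := by
        funext k
        rcases eq_or_ne k i with rfl | hki
        · simp only [Function.comp_apply, hg, Equiv.swap_apply_left]; exact he.symm
        rcases eq_or_ne k j with rfl | hkj
        · simp only [Function.comp_apply, hg, Equiv.swap_apply_right]; exact he
        · simp [hg, Equiv.swap_apply_of_ne_of_ne hki hkj]
      have h1 := pd_perm hopen hΓsym hfsym hdiff g hlam j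
      rw [hfix, hg, Equiv.swap_apply_right] at h1
      exact hne' h1
    -- the direction d and the derivative D in that direction
    set d : Fin n → ℝ := lam ∘ g - lam with hd
    have hdi : d i = lam j - lam i := by
      simp only [hd, Pi.sub_apply, Function.comp_apply, hg, Equiv.swap_apply_left]
    have hdj : d j = lam i - lam j := by
      simp only [hd, Pi.sub_apply, Function.comp_apply, hg, Equiv.swap_apply_right]
    have hdk : ∀ k, k ≠ i → k ≠ j → d k = 0 := by
      intro k h1 h2
      simp [hd, hg, Equiv.swap_apply_of_ne_of_ne h1 h2]
    set D := fderiv ℝ f lam d with hD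
    have hDval : D = (lam j - lam i) * (pd f lam i - pd f lam j) := by
      rw [hD, expand]
      have hrestrict : ∑ k, d k * pd f lam k
          = ∑ k ∈ ({i, j} : Finset (Fin n)), d k * pd f lam k := by
        refine (Finset.sum_subset (Finset.subset_univ _) ?_).symm
        intro k _ hk
        simp only [Finset.mem_insert, Finset.mem_singleton] at hk
        push_neg at hk
        rw [hdk k hk.1 hk.2, zero_mul]
      rw [hrestrict, Finset.sum_pair hij, hdi, hdj]
      ring
    have hD0 : 0 ≤ D := by
      have hgi := grad_ineq hconc hdiff hlam hlam'Γ
      rw [hlam'lev, hlev] at hgi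
      have : fderiv ℝ f lam (lam ∘ g - lam) = D := by rw [hD, hd]
      rw [this] at hgi
      linarith
    have hDne : D ≠ 0 := by
      rw [hDval]
      exact mul_ne_zero (sub_ne_zero.2 (Ne.symm hlij)) (sub_ne_zero.2 hne')
    have hDpos : 0 < D := hD0.lt_of_ne (Ne.symm hDne)
    -- t_lam = c, hence the derivative towards c𝟏 vanishes
    have hSl := hS lam hlam hlev
    have htlam : (∑ k, pd f lam k * lam k) / (∑ k, pd f lam k) = c :=
      le_antisymm (htle lam hlam hlev) (hτc ▸ hτ.1 ⟨lam, hlam, hlev, rfl⟩)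
    have hnum : ∑ k, pd f lam k * lam k = c * ∑ k, pd f lam k := by
      have := (div_eq_iff (ne_of_gt hSl)).1 htlam
      linarith
    have hE : fderiv ℝ f lam (cv - lam) = 0 := by
      rw [expand]
      have hexp : ∑ k, (cv - lam) k * pd f lam k
          = c * (∑ k, pd f lam k) - ∑ k, pd f lam k * lam k := by
        rw [Finset.mul_sum, ← Finset.sum_sub_distrib]
        refine Finset.sum_congr rfl fun k _ => ?_
        simp only [Pi.sub_apply, hcv]
        ring
      rw [hexp, hnum]; ring
    -- the whole segment from lam to c𝟏 lies in the level set
    have hzΓ : ∀ t : ℝ, t ∈ Set.Icc (0:ℝ) 1 → lam + t • (cv - lam) ∈ Γ := by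
      intro t ht
      have := hconv hlam hcΓ (by linarith [ht.2] : (0:ℝ) ≤ 1 - t) ht.1 (by ring)
      convert this using 1
      module
    have hzlev : ∀ t : ℝ, t ∈ Set.Icc (0:ℝ) 1 → f (lam + t • (cv - lam)) = σ := by
      intro t ht
      have hup : f (lam + t • (cv - lam)) ≤ σ := by
        have hgi := grad_ineq hconc hdiff hlam (hzΓ t ht)
        have heq3 : lam + t • (cv - lam) - lam = t • (cv - lam) := by module
        rw [heq3, (fderiv ℝ f lam).map_smul, hE, hlev] at hgi
        simpa using hgi
      have hlo : σ ≤ f (lam + t • (cv - lam)) := by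
        have hcc := hconc.2 hlam hcΓ (by linarith [ht.2] : (0:ℝ) ≤ 1 - t) ht.1 (by ring)
        rw [hlev, hclev] at hcc
        have heq2 : (1 - t) • lam + t • cv = lam + t • (cv - lam) := by module
        rw [heq2] at hcc
        have heq4 : (1 - t) • σ + t • σ = σ := by simp only [smul_eq_mul]; ring
        linarith [heq4.le, heq4.ge]
      linarith
    -- there is ε ∈ (0, 1/2) with f (lam + ε • d) > σ
    have hlined : HasDerivAt (fun t : ℝ => lam + t • d) d 0 := by
      simpa using ((hasDerivAt_id (0:ℝ)).smul_const d).const_add lam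
    have hfl' : HasFDerivAt f (fderiv ℝ f lam) (lam + (0:ℝ) • d) := by
      simpa using (hdiff lam hlam).hasFDerivAt
    have hhd : HasDerivAt (fun t : ℝ => f (lam + t • d)) D 0 := hfl'.comp_hasDerivAt 0 hlined
    have hslopeD : Tendsto (slope (fun t : ℝ => f (lam + t • d)) 0) (𝓝[>] (0:ℝ)) (𝓝 D) :=
      (hasDerivAt_iff_tendsto_slope.1 hhd).mono_left
        (nhdsWithin_mono _ fun t ht => ne_of_gt ht)
    obtain ⟨ε, hεslope, hεmem⟩ :=
      ((hslopeD.eventually (eventually_gt_nhds hDpos)).and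
        (Ioo_mem_nhdsGT_of_mem (by norm_num : (0:ℝ) ∈ Set.Ico (0:ℝ) (1/2)))).exists
    have hε0 : 0 < ε := hεmem.1
    have hεhalf : ε < 1/2 := hεmem.2
    have hεlt : σ < f (lam + ε • d) := by
      have hsl : 0 < (f (lam + ε • d) - f (lam + (0:ℝ) • d)) / (ε - 0) := by
        simpa [slope_def_field] using hεslope
      have hl0 : f (lam + (0:ℝ) • d) = σ := by
        rw [show lam + (0:ℝ) • d = lam by module, hlev]
      rw [sub_zero, hl0] at hsl
      rcases div_pos_iff.1 hsl with ⟨h3, _⟩ | ⟨_, h4⟩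
      · linarith
      · linarith
    -- the midpoint μm of lam and lam ∘ g has f (μm) > σ
    set μm : Fin n → ℝ := lam + (1/2 : ℝ) • d with hμm
    have hxεΓ : lam + ε • d ∈ Γ := by
      have := hconv hlam hlam'Γ (by linarith : (0:ℝ) ≤ 1 - ε) hε0.le (by ring)
      convert this using 1
      rw [hd]; module
    have hcompeq : (lam + ε • d) ∘ g = lam ∘ g - ε • d := by
      funext k
      simp only [Function.comp_apply, Pi.add_apply, Pi.smul_apply, Pi.sub_apply, hd,
        smul_eq_mul]
      have hggk : g (g k) = k := by rw [hg]; exact Equiv.swap_apply_self i j k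
      rw [hggk]
      ring
    have hyεΓ : lam ∘ g - ε • d ∈ Γ := by
      rw [← hcompeq]; exact hΓsym g _ hxεΓ
    have hsymε : f (lam ∘ g - ε • d) = f (lam + ε • d) := by
      rw [← hcompeq]; exact hfsym g _ hxεΓ
    have hμmΓ : μm ∈ Γ := by
      have := hconv hlam hlam'Γ (by norm_num : (0:ℝ) ≤ 1/2) (by norm_num : (0:ℝ) ≤ 1/2)
        (by norm_num)
      convert this using 1
      rw [hμm, hd]; module
    have hμmge : f (lam + ε • d) ≤ f μm := by
      have hcc := hconc.2 hxεΓ hyεΓ (by norm_num : (0:ℝ) ≤ 1/2) (by norm_num : (0:ℝ) ≤ 1/2)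
        (by norm_num)
      have heq2 : (1/2 : ℝ) • (lam + ε • d) + (1/2 : ℝ) • (lam ∘ g - ε • d) = μm := by
        rw [hμm, hd]; module
      rw [heq2, hsymε] at hcc
      have heq5 : (1/2 : ℝ) • f (lam + ε • d) + (1/2 : ℝ) • f (lam + ε • d)
          = f (lam + ε • d) := by simp only [smul_eq_mul]; ring
      linarith [heq5.le, heq5.ge]
    have hδpos : 0 < f μm - σ := by linarith
    set δ := f μm - σ with hδ
    -- along the segment shrinking towards c𝟏 the derivative in direction d stays ≥ 2δ
    have hkey : ∀ t : ℝ, t ∈ Set.Ioo (0:ℝ) 1 →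
        2 * δ ≤ fderiv ℝ f (cv + t • (lam - cv)) d := by
      intro t ht
      have ht1 : (1:ℝ) - t ∈ Set.Icc (0:ℝ) 1 := ⟨by linarith [ht.2], by linarith [ht.1]⟩
      have hzeq : lam + (1 - t) • (cv - lam) = cv + t • (lam - cv) := by module
      have hlamtG : cv + t • (lam - cv) ∈ Γ := by
        rw [← hzeq]; exact hzΓ _ ht1
      have hlamtlev : f (cv + t • (lam - cv)) = σ := by
        rw [← hzeq]; exact hzlev _ ht1
      have hμtΓ : cv + t • (μm - cv) ∈ Γ := by
        have := hconv hcΓ hμmΓ (by linarith [ht.2] : (0:ℝ) ≤ 1 - t) ht.1.le (by ring)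
        convert this using 1
        module
      have hμtlo : σ + t * δ ≤ f (cv + t • (μm - cv)) := by
        have hcc := hconc.2 hcΓ hμmΓ (by linarith [ht.2] : (0:ℝ) ≤ 1 - t) ht.1.le (by ring)
        rw [hclev] at hcc
        have heq2 : (1 - t) • cv + t • μm = cv + t • (μm - cv) := by module
        rw [heq2] at hcc
        have hδle : (1 - t) • σ + t • f μm = σ + t * δ := by
          simp only [smul_eq_mul, hδ]; ring
        linarith [hδle.le, hδle.ge]
      have hgi := grad_ineq hconc hdiff hlamtG hμtΓ
      have hdiffpt : (cv + t • (μm - cv)) - (cv + t • (lam - cv)) = (t/2) • d := by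
        rw [hμm]; module
      rw [hlamtlev, hdiffpt, (fderiv ℝ f _).map_smul] at hgi
      have h2 : σ + t * δ ≤ σ + (t/2) * fderiv ℝ f (cv + t • (lam - cv)) d := by
        simpa [smul_eq_mul] using le_trans hμtlo hgi
      have ht0 : 0 < t := ht.1
      nlinarith
    -- take the limit t → 0⁺
    have hcontf : ContinuousOn (fderiv ℝ f) Γ :=
      hsmooth.continuousOn_fderiv_of_isOpen hopen (by simp)
    have hctA : ContinuousAt (fderiv ℝ f) cv :=
      hcontf.continuousAt (hopen.mem_nhds hcΓ)
    have hpathc : Continuous (fun t : ℝ => cv + t • (lam - cv)) := by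
      exact continuous_const.add (continuous_id.smul continuous_const)
    have hpath : Tendsto (fun t : ℝ => cv + t • (lam - cv)) (𝓝[>] (0:ℝ)) (𝓝 cv) := by
      have h0 := hpathc.tendsto 0
      simp only [zero_smul, add_zero] at h0
      exact h0.mono_left nhdsWithin_le_nhds
    have hlim : Tendsto (fun t : ℝ => fderiv ℝ f (cv + t • (lam - cv)) d)
        (𝓝[>] (0:ℝ)) (𝓝 (fderiv ℝ f cv d)) := by
      have heval : Continuous (fun L : (Fin n → ℝ) →L[ℝ] ℝ => L d) :=
        (ContinuousLinearMap.apply ℝ ℝ d).continuous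
      exact (heval.continuousAt.tendsto.comp (hctA.tendsto.comp hpath))
    have hfinal : 2 * δ ≤ fderiv ℝ f cv d := by
      refine ge_of_tendsto hlim ?_
      filter_upwards [Ioo_mem_nhdsGT_of_mem (by norm_num : (0:ℝ) ∈ Set.Ico (0:ℝ) 1)] with t ht
      exact hkey t ht
    -- but the derivative at c𝟏 in direction d is zero by symmetry
    have hzero : fderiv ℝ f cv d = 0 := by
      rw [expand]
      have hrestrict : ∑ k, d k * pd f cv k
          = ∑ k ∈ ({i, j} : Finset (Fin n)), d k * pd f cv k := by
        refine (Finset.sum_subset (Finset.subset_univ _) ?_).symm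
        intro k _ hk
        simp only [Finset.mem_insert, Finset.mem_singleton] at hk
        push_neg at hk
        rw [hdk k hk.1 hk.2, zero_mul]
      rw [hrestrict, Finset.sum_pair hij, hdi, hdj, hpdc i j]
      ring
    rw [hzero] at hfinal
    linarith
  · -- easy direction: equal partial derivatives imply τ = c
    intro hall
    refine le_antisymm hτle (hτ.2 ?_)
    rintro t ⟨x, hx, hxlev, rfl⟩
    have hSx := hS x hx hxlev
    have i0 : Fin n := ⟨0, hn⟩
    have hpx : ∀ k, pd f x k = pd f x i0 := fun k => hall x hx hxlev k i0
    have hSxval : (∑ k, pd f x k) = n * pd f x i0 := by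
      rw [Finset.sum_congr rfl fun k _ => hpx k]
      simp [Finset.card_univ, nsmul_eq_mul]
    have hn' : (0:ℝ) ≤ (n:ℝ) := by exact_mod_cast hn.le
    have hppos : 0 < pd f x i0 := by
      rw [hSxval] at hSx
      exact arith_pos_of_mul hn' hSx
    -- partial derivatives at cv are all equal to a positive a
    have hac : ∀ k, pd f cv k = pd f cv i0 := fun k => hpdc k i0
    have hScval : (∑ k, pd f cv k) = n * pd f cv i0 := by
      have h2 : (∑ k, pd f cv k) = ∑ _k : Fin n, pd f cv i0 :=
        Finset.sum_congr rfl fun k _ => hac k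
      rw [h2]
      simp [Finset.card_univ, nsmul_eq_mul]
    have hapos : 0 < pd f cv i0 := by
      rw [hScval] at hSc
      exact arith_pos_of_mul hn' hSc
    -- gradient inequality at cv towards x gives ∑ x ≥ n c
    have hgi := grad_ineq hconc hdiff hcΓ hx
    rw [expand, hclev, hxlev] at hgi
    have hexp : ∑ k, (x - cv) k * pd f cv k
        = pd f cv i0 * ((∑ k, x k) - n * c) := by
      have h1 : ∀ k : Fin n, (x - cv) k * pd f cv k = (x k - c) * pd f cv i0 := by
        intro k
        rw [hac k]
        simp only [Pi.sub_apply, hcv]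
      have h2 : ∑ k, (x - cv) k * pd f cv k = ∑ k, (x k - c) * pd f cv i0 :=
        Finset.sum_congr rfl fun k _ => h1 k
      rw [h2, ← Finset.sum_mul, Finset.sum_sub_distrib]
      simp only [Finset.sum_const, Finset.card_univ, Fintype.card_fin, nsmul_eq_mul]
      ring
    rw [hexp] at hgi
    have hsumx : (n:ℝ) * c ≤ ∑ k, x k := arith_le_of_add hapos hgi
    -- conclude
    rw [le_div_iff₀ hSx]
    have hnumx : ∑ k, pd f x k * x k = pd f x i0 * ∑ k, x k := by
      rw [Finset.mul_sum]
      exact Finset.sum_congr rfl fun k _ => by rw [hpx k]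
    rw [hnumx, hSxval]
    exact arith_mul_le hppos hsumx
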